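/- arXiv:1410.8287 — 3 statements merged into one kernel-verified Lean document; each statement's English description precedes it below -/
import Mathlib

section
/- Let Δ ⊆ ℝ^d be a reflexive polytope, let 1 ≤ k ≤ 3, and let v₁,…,v_k ∈ Δ ∩ ℤ^d be ℝ-linearly independent points satisfying Cone(v₁,…,v_k) ∩ Δ ∩ ℤ^d = {0, v₁, …, v_k}. Then v₁,…,v_k can be extended to a ℤ-basis of ℤ^d (i.e. the cone Cone(v₁,…,v_k) is unimodular). -/
/-!
Write a lattice point of the real span of the `vᵢ` as `∑ qᵢ vᵢ`. Then `w = ∑ fract(qᵢ) vᵢ` is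
again a lattice point of the cone; if `w ≠ 0`, the cone hypothesis and linear independence put it
outside `Δ`, so a lattice point of `Δ*` pairs with `w` to at most `-2` while it pairs with every
`vᵢ` to at least `-1`, forcing `∑ fract(qᵢ) ≥ 2`. The same applies to `-q`, but
`fract(qᵢ) + fract(-qᵢ) ≤ 1`, so `k ≥ 4` unless every `qᵢ` is an integer. Hence the `vᵢ`
span a saturated sublattice of `ℤ^d`; its quotient is then free, the projection splits, and a
basis of the sublattice extends.
-/

open Pointwise

/-- The standard pairing `⟨m,n⟩ = ∑ i, mᵢ nᵢ` on `ℝ^d`. -/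
def pairing {d : ℕ} (m n : Fin d → ℝ) : ℝ := ∑ i, m i * n i

/-- A point of `ℝ^d` is a lattice point if all coordinates are integers. -/
def IsLatticePt {d : ℕ} (v : Fin d → ℝ) : Prop := ∀ i, ∃ n : ℤ, v i = (n : ℝ)

/-- The set of lattice points of `ℝ^d`. -/
def latticePts (d : ℕ) : Set (Fin d → ℝ) := {v | IsLatticePt v}

/-- A lattice polytope is the convex hull of finitely many lattice points. -/
def IsLatticePolytope {d : ℕ} (Δ : Set (Fin d → ℝ)) : Prop :=
  ∃ S : Finset (Fin d → ℝ), (S : Set (Fin d → ℝ)) ⊆ latticePts d ∧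
    Δ = convexHull ℝ (S : Set (Fin d → ℝ))

/-- The dual polytope `Δ* = {m : ⟨m,n⟩ ≥ -1 for all n ∈ Δ}`. -/
def dualPolytope {d : ℕ} (Δ : Set (Fin d → ℝ)) : Set (Fin d → ℝ) :=
  {m | ∀ n ∈ Δ, -1 ≤ pairing m n}

/-- A reflexive polytope: a lattice polytope with `0` in its interior
whose dual polytope is again a lattice polytope. -/
def IsReflexive {d : ℕ} (Δ : Set (Fin d → ℝ)) : Prop :=
  IsLatticePolytope Δ ∧ (0 : Fin d → ℝ) ∈ interior Δ ∧ IsLatticePolytope (dualPolytope Δ)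

/-- `Cone(v₁,…,v_k) = {r₁v₁ + ⋯ + r_kv_k : rᵢ ≥ 0}`. -/
def coneOf {d k : ℕ} (v : Fin k → (Fin d → ℝ)) : Set (Fin d → ℝ) :=
  {x | ∃ r : Fin k → ℝ, (∀ i, 0 ≤ r i) ∧ x = ∑ i, r i • v i}

/-- `r·∂Δ`, the frontier (topological boundary) of the dilate `rΔ`. -/
def bdry {d : ℕ} (r : ℝ) (Δ : Set (Fin d → ℝ)) : Set (Fin d → ℝ) := frontier (r • Δ)

/-- The points of `S` lie in a common proper face of `Δ`: there is `u` with
`⟨u,x⟩ ≤ 1` on `Δ` and `⟨u,v⟩ = 1` for all `v ∈ S`. -/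
def InCommonFace {d : ℕ} (Δ : Set (Fin d → ℝ)) (S : Set (Fin d → ℝ)) : Prop :=
  ∃ u : Fin d → ℝ, (∀ x ∈ Δ, pairing u x ≤ 1) ∧ ∀ v ∈ S, pairing u v = 1

/-- Coordinatewise cast of an integer vector to a real vector. -/
def toRealVec {d : ℕ} (n : Fin d → ℤ) : Fin d → ℝ := fun i => (n i : ℝ)

open Submodule

section TorsionFreeQuotient

variable {R M : Type*}

theorem Submodule.isTorsionFree_quotient_of_smul_mem [Ring R] [Nontrivial R] [AddCommGroup M]
    [Module R M] (N : Submodule R M)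
    (hN : ∀ (r : R) (x : M), r ≠ 0 → r • x ∈ N → x ∈ N) :
    Module.IsTorsionFree R (M ⧸ N) := by
  refine .of_smul_eq_zero fun r q hq => or_iff_not_imp_left.2 fun hr => ?_
  obtain ⟨x, rfl⟩ := N.mkQ_surjective q
  rw [← map_smul, mkQ_apply, Quotient.mk_eq_zero] at hq
  exact (Quotient.mk_eq_zero N).2 (hN r x hr hq)

theorem LinearIndependent.exists_basis_of_isTorsionFree_quotient {ι : Type*} [CommRing R]
    [IsDomain R] [IsPrincipalIdealRing R] [AddCommGroup M] [Module R M] [Module.Finite R M]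
    {v : ι → M} (hv : LinearIndependent R v)
    [Module.IsTorsionFree R (M ⧸ span R (Set.range v))] :
    ∃ b : Module.Basis (ι ⊕ Module.Free.ChooseBasisIndex R (M ⧸ span R (Set.range v))) R M,
      b ∘ Sum.inl = v := by
  set N := span R (Set.range v)
  obtain ⟨l, hl⟩ := Module.projective_lifting_property N.mkQ LinearMap.id N.mkQ_surjective
  obtain ⟨e, he, -⟩ :=
    (LinearMap.exact_subtype_mkQ N).splitSurjectiveEquiv N.injective_subtype ⟨l, hl⟩
  refine ⟨((Module.Basis.span hv).prod (Module.Free.chooseBasis R (M ⧸ N))).map e.symm,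
    funext fun i => ?_⟩
  simpa [Module.Basis.span_apply] using congr($he (Module.Basis.span hv i)).symm

end TorsionFreeQuotient

section Polytope

variable {d : ℕ}

theorem pairing_eq_dotProduct (m n : Fin d → ℝ) : pairing m n = m ⬝ᵥ n := rfl

theorem IsLatticePt.exists_pairing_eq_intCast {p w : Fin d → ℝ} (hp : IsLatticePt p)
    (hw : IsLatticePt w) : ∃ z : ℤ, pairing p w = z := by
  choose a ha using hp
  choose b hb using hw
  exact ⟨∑ i, a i * b i, by simp [pairing, ha, hb]⟩

theorem IsLatticePolytope.convex {P : Set (Fin d → ℝ)} (hP : IsLatticePolytope P) :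
    Convex ℝ P := by
  obtain ⟨S, -, rfl⟩ := hP
  exact convex_convexHull ℝ _

theorem IsLatticePolytope.isClosed {P : Set (Fin d → ℝ)} (hP : IsLatticePolytope P) :
    IsClosed P := by
  obtain ⟨S, -, rfl⟩ := hP
  exact (S.finite_toSet.isCompact_convexHull ℝ).isClosed

theorem IsLatticePolytope.exists_isLatticePt_pairing_le {P : Set (Fin d → ℝ)}
    (hP : IsLatticePolytope P) {u : Fin d → ℝ} (hu : u ∈ P) (w : Fin d → ℝ) :
    ∃ p ∈ P, IsLatticePt p ∧ pairing p w ≤ pairing u w := by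
  obtain ⟨S, hS, rfl⟩ := hP
  obtain ⟨p, hpS, hp⟩ := ((dotProductEquiv ℝ (Fin d) w).concaveOn convex_univ)
    |>.exists_le_of_mem_convexHull (Set.subset_univ _) hu
  refine ⟨p, subset_convexHull ℝ _ hpS, hS hpS, ?_⟩
  simpa [pairing_eq_dotProduct, dotProduct_comm w] using hp

theorem exists_mem_dualPolytope_pairing_lt_neg_one {Δ : Set (Fin d → ℝ)}
    (hconv : Convex ℝ Δ) (hclosed : IsClosed Δ) (h0 : 0 ∈ Δ) {w : Fin d → ℝ} (hw : w ∉ Δ) :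
    ∃ u ∈ dualPolytope Δ, pairing u w < -1 := by
  obtain ⟨f, c, hfΔ, hcw⟩ := geometric_hahn_banach_closed_point hconv hclosed hw
  have hc : 0 < c := by simpa using hfΔ 0 h0
  set m := (dotProductEquiv ℝ (Fin d)).symm f.toLinearMap
  have hm : ∀ y, pairing (-c⁻¹ • m) y = -(c⁻¹ * f y) := fun y => by
    rw [pairing_eq_dotProduct, smul_dotProduct, smul_eq_mul, neg_mul]
    congr 2
    exact congr($((dotProductEquiv ℝ (Fin d)).apply_symm_apply f.toLinearMap) y)
  refine ⟨-c⁻¹ • m, fun y hy => ?_, ?_⟩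
  · rw [hm, neg_le_neg_iff, inv_mul_le_one₀ hc]
    exact (hfΔ y hy).le
  · rw [hm, neg_lt_neg_iff, one_lt_inv_mul₀ hc]
    exact hcw

theorem IsReflexive.exists_mem_dualPolytope_pairing_le_neg_two
    {Δ : Set (Fin d → ℝ)} (hΔ : IsReflexive Δ) {w : Fin d → ℝ} (hw : IsLatticePt w)
    (hwΔ : w ∉ Δ) : ∃ p ∈ dualPolytope Δ, pairing p w ≤ -2 := by
  obtain ⟨hΔlat, h0, hdual⟩ := hΔ
  obtain ⟨u, hu, huw⟩ := exists_mem_dualPolytope_pairing_lt_neg_one hΔlat.convex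
    hΔlat.isClosed (interior_subset h0) hwΔ
  obtain ⟨p, hpΔ, hp, hpu⟩ := hdual.exists_isLatticePt_pairing_le hu w
  obtain ⟨z, hz⟩ := hp.exists_pairing_eq_intCast hw
  have hz1 : z < -1 := by exact_mod_cast hz ▸ hpu.trans_lt huw
  refine ⟨p, hpΔ, ?_⟩
  rw [hz]
  exact_mod_cast (show z ≤ -2 by omega)

end Polytope

theorem Int.fract_add_fract_neg_le_one {R : Type*} [Ring R] [LinearOrder R]
    [IsStrictOrderedRing R] [FloorRing R] (x : R) : Int.fract x + Int.fract (-x) ≤ 1 := by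
  by_cases hx : Int.fract x = 0
  · simp [hx, Int.fract_neg_eq_zero.2 hx]
  · simp [Int.fract_neg hx]

section Lattice

variable {d : ℕ}

def latticeAddSubgroup (d : ℕ) : AddSubgroup (Fin d → ℝ) :=
  AddSubgroup.pi Set.univ fun _ => (Int.castAddHom ℝ).range

theorem mem_latticeAddSubgroup {w : Fin d → ℝ} :
    w ∈ latticeAddSubgroup d ↔ IsLatticePt w := by
  simp only [latticeAddSubgroup, IsLatticePt, AddSubgroup.mem_pi, Set.mem_univ, forall_const,
    AddMonoidHom.mem_range, Int.coe_castAddHom, eq_comm]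

theorem toRealVec_mem_latticeAddSubgroup (n : Fin d → ℤ) :
    toRealVec n ∈ latticeAddSubgroup d :=
  mem_latticeAddSubgroup.2 fun i => ⟨n i, rfl⟩

theorem toRealVec_injective : Function.Injective (toRealVec : (Fin d → ℤ) → Fin d → ℝ) :=
  fun _ _ h => funext fun i => by simpa [toRealVec] using congrFun h i

theorem toRealVec_sum_smul {ι : Type*} [Fintype ι] (c : ι → ℤ) (v : ι → Fin d → ℤ) :
    toRealVec (∑ i, c i • v i) = ∑ i, (c i : ℝ) • toRealVec (v i) := by
  ext j
  simp [toRealVec, Finset.sum_apply]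

theorem sum_fract_smul_mem_latticeAddSubgroup {ι : Type*} [Fintype ι] {V : ι → Fin d → ℝ}
    (hV : ∀ i, V i ∈ latticeAddSubgroup d) {q : ι → ℝ}
    (hq : ∑ i, q i • V i ∈ latticeAddSubgroup d) :
    ∑ i, Int.fract (q i) • V i ∈ latticeAddSubgroup d := by
  have : ∑ i, Int.fract (q i) • V i = ∑ i, q i • V i - ∑ i, ⌊q i⌋ • V i := by
    simp only [Int.fract, sub_smul, Finset.sum_sub_distrib, Int.cast_smul_eq_zsmul]
  rw [this]
  exact sub_mem hq (sum_mem fun i _ => zsmul_mem (hV i) _)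

end Lattice

section Cone

variable {d k : ℕ} {Δ : Set (Fin d → ℝ)} {V : Fin k → Fin d → ℝ}

theorem IsReflexive.two_le_sum_of_sum_smul_mem_latticeAddSubgroup (hΔ : IsReflexive Δ)
    (hVΔ : ∀ i, V i ∈ Δ) (hV : LinearIndependent ℝ V)
    (hcone : coneOf V ∩ Δ ∩ latticePts d ⊆ insert 0 (Set.range V))
    {s : Fin k → ℝ} (hs0 : ∀ i, 0 ≤ s i) (hs1 : ∀ i, s i < 1) (hs : s ≠ 0)
    (hlat : ∑ i, s i • V i ∈ latticeAddSubgroup d) : 2 ≤ ∑ i, s i := by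
  have hlat' := mem_latticeAddSubgroup.1 hlat
  have hsΔ : ∑ i, s i • V i ∉ Δ := by
    intro hsΔ
    rcases hcone ⟨⟨⟨s, hs0, rfl⟩, hsΔ⟩, hlat'⟩ with h0 | ⟨i, hi⟩
    · exact hs (funext (Fintype.linearIndependent_iffₛ.1 hV s 0 (by simpa using h0)))
    · have := Fintype.linearIndependent_iffₛ.1 hV s (Pi.single i 1)
        (by simp [hi, Pi.single_apply]) i
      simp only [Pi.single_eq_same] at this
      exact (hs1 i).ne this
  obtain ⟨p, hpΔ, hp⟩ := hΔ.exists_mem_dualPolytope_pairing_le_neg_two hlat' hsΔ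
  have : -∑ i, s i ≤ -2 := calc
    -∑ i, s i = ∑ i, s i * -1 := by simp
    _ ≤ ∑ i, s i * pairing p (V i) :=
      Finset.sum_le_sum fun i _ => mul_le_mul_of_nonneg_left (hpΔ _ (hVΔ i)) (hs0 i)
    _ = pairing p (∑ i, s i • V i) := by
      simp [pairing_eq_dotProduct, dotProduct_sum, dotProduct_smul]
    _ ≤ -2 := hp
  linarith

theorem IsReflexive.fract_eq_zero_of_sum_smul_mem_latticeAddSubgroup (hk : k ≤ 3)
    (hΔ : IsReflexive Δ) (hVlat : ∀ i, V i ∈ latticeAddSubgroup d) (hVΔ : ∀ i, V i ∈ Δ)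
    (hV : LinearIndependent ℝ V) (hcone : coneOf V ∩ Δ ∩ latticePts d ⊆ insert 0 (Set.range V))
    {q : Fin k → ℝ} (hq : ∑ i, q i • V i ∈ latticeAddSubgroup d) (i : Fin k) :
    Int.fract (q i) = 0 := by
  by_contra hi
  have two_le {r : Fin k → ℝ} (hr : ∑ i, r i • V i ∈ latticeAddSubgroup d)
      (hri : Int.fract (r i) ≠ 0) : 2 ≤ ∑ i, Int.fract (r i) :=
    hΔ.two_le_sum_of_sum_smul_mem_latticeAddSubgroup hVΔ hV hcone
      (fun _ => Int.fract_nonneg _) (fun _ => Int.fract_lt_one _) (fun h => hri (congrFun h i))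
      (sum_fract_smul_mem_latticeAddSubgroup hVlat hr)
  have h₁ := two_le hq hi
  have h₂ := two_le (r := -q) (by simpa using neg_mem hq) (by simpa using hi)
  have h₃ : ∑ i, (Int.fract (q i) + Int.fract (-q i)) ≤ k := calc
    _ ≤ ∑ _i : Fin k, (1 : ℝ) :=
      Finset.sum_le_sum fun i _ => Int.fract_add_fract_neg_le_one (q i)
    _ = k := by simp
  have : (k : ℝ) ≤ 3 := by exact_mod_cast hk
  rw [Finset.sum_add_distrib] at h₃
  simp only [Pi.neg_apply] at h₂
  linarith

end Cone

theorem IsReflexive.mem_span_of_smul_mem_span {d k : ℕ} {Δ : Set (Fin d → ℝ)}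
    {v : Fin k → Fin d → ℤ} (hk : k ≤ 3) (hΔ : IsReflexive Δ) (hvΔ : ∀ i, toRealVec (v i) ∈ Δ)
    (hli : LinearIndependent ℝ fun i => toRealVec (v i))
    (hcone : coneOf (fun i => toRealVec (v i)) ∩ Δ ∩ latticePts d ⊆
      insert 0 (Set.range fun i => toRealVec (v i)))
    {n : ℤ} {x : Fin d → ℤ} (hn : n ≠ 0) (hx : n • x ∈ span ℤ (Set.range v)) :
    x ∈ span ℤ (Set.range v) := by
  obtain ⟨c, hc⟩ := (mem_span_range_iff_exists_fun ℤ).1 hx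
  have hxc : toRealVec x = ∑ i, ((c i : ℝ) / n) • toRealVec (v i) := by
    have hnR : (n : ℝ) ≠ 0 := by exact_mod_cast hn
    calc toRealVec x = (n : ℝ)⁻¹ • toRealVec (n • x) := by ext j; simp [toRealVec, hnR]
      _ = ∑ i, ((c i : ℝ) / n) • toRealVec (v i) := by
        rw [← hc, toRealVec_sum_smul, Finset.smul_sum]
        simp [div_eq_inv_mul, mul_smul]
  have hint (i : Fin k) : ∃ m : ℤ, (m : ℝ) = c i / n :=
    Int.fract_eq_zero_iff.1 <| hΔ.fract_eq_zero_of_sum_smul_mem_latticeAddSubgroup hk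
      (fun _ => toRealVec_mem_latticeAddSubgroup _) hvΔ hli hcone
      (hxc ▸ toRealVec_mem_latticeAddSubgroup x) i
  choose m hm using hint
  refine (mem_span_range_iff_exists_fun ℤ).2 ⟨m, toRealVec_injective ?_⟩
  rw [toRealVec_sum_smul, hxc]
  simp [hm]

theorem low_dimensional_cones_unimodular_general
    (d k : ℕ) (hk3 : k ≤ 3)
    (Δ : Set (Fin d → ℝ)) (hΔ : IsReflexive Δ)
    (v : Fin k → (Fin d → ℤ))
    (hvΔ : ∀ i, toRealVec (v i) ∈ Δ)
    (hli : LinearIndependent ℝ (fun i => toRealVec (v i)))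
    (hcone : coneOf (fun i => toRealVec (v i)) ∩ Δ ∩ latticePts d
      = insert (0 : Fin d → ℝ) (Set.range fun i => toRealVec (v i))) :
    ∃ B : Module.Basis (Fin d) ℤ (Fin d → ℤ), Set.range v ⊆ Set.range ⇑B := by
  have hv : LinearIndependent ℤ v :=
    (hli.restrict_scalars' ℤ).of_comp
      (LinearMap.compLeft (Int.castAddHom ℝ).toIntLinearMap (Fin d))
  have := (span ℤ (Set.range v)).isTorsionFree_quotient_of_smul_mem fun _ _ hn hx =>
    hΔ.mem_span_of_smul_mem_span hk3 hvΔ hli hcone.subset hn hx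
  obtain ⟨b, hb⟩ := hv.exists_basis_of_isTorsionFree_quotient
  refine ⟨b.reindex (b.indexEquiv (Pi.basisFun ℤ (Fin d))), ?_⟩
  rw [Module.Basis.range_reindex]
  rintro _ ⟨i, rfl⟩
  exact ⟨.inl i, congrFun hb i⟩

/-- For a reflexive polytope `Δ ⊆ ℝ^d` and `1 ≤ k ≤ 3` linearly
independent lattice points `v₁,…,v_k ∈ Δ` with `Cone(v₁,…,v_k) ∩ Δ ∩ ℤ^d = {0,v₁,…,v_k}`,
the points `v₁,…,v_k` extend to a ℤ-basis of `ℤ^d`. -/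
theorem low_dimensional_cones_unimodular
    (d k : ℕ) (hk1 : 1 ≤ k) (hk3 : k ≤ 3)
    (Δ : Set (Fin d → ℝ)) (hΔ : IsReflexive Δ)
    (v : Fin k → (Fin d → ℤ))
    (hvΔ : ∀ i, toRealVec (v i) ∈ Δ)
    (hli : LinearIndependent ℝ (fun i => toRealVec (v i)))
    (hcone : coneOf (fun i => toRealVec (v i)) ∩ Δ ∩ latticePts d
      = insert (0 : Fin d → ℝ) (Set.range fun i => toRealVec (v i))) :
    ∃ B : Module.Basis (Fin d) ℤ (Fin d → ℤ), Set.range v ⊆ Set.range ⇑B :=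
  low_dimensional_cones_unimodular_general d k hk3 Δ hΔ v hvΔ hli hcone
end

section
/- Fix natural numbers s, t, r. For each i = 0, …, r let αᵢ ∈ ℤ^s and βᵢ ∈ ℕ^t be exponent vectors, and assume β₀ = 0. Let D = {z ∈ ℂ^{s+t} : z₁ ≠ 0, …, z_s ≠ 0}, and for a = (a₀, …, a_r) ∈ ℂ^{r+1} define f_a : D → ℂ by f_a(z) = Σ_{i=0}^{r} aᵢ · (∏_{j=1}^{s} z_j^{αᵢ,ⱼ}) · (∏_{j=1}^{t} z_{s+j}^{βᵢ,ⱼ}), where the powers of z₁,…,z_s are integer powers (well-defined on D). Then the set of a ∈ ℂ^{r+1} for which there exists z ∈ D with f_a(z) = 0 and with all complex partial derivatives ∂f_a/∂z_j (j = 1, …, s+t) vanishing at z is contained in a Borel subset of ℂ^{r+1} of Lebesgue measure zero. In particular, for generic a the hypersurface {z ∈ D : f_a(z) = 0} is nonsingular. -/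
/-
Write `f_a = a₀ M₀ + ∑_{i ≥ 1} aᵢ Mᵢ` with monomials `Mᵢ`; since `β₀ = 0`, `M₀` has no zero on
`D`. Then `f_a` has a singular zero in `D` exactly when `a₀` is a critical value of the holomorphic
function `-(∑_{i ≥ 1} aᵢ Mᵢ) / M₀` on `D`. So every line in the `a₀`-direction meets the set of
singular coefficients in a null set, by Sard's theorem for holomorphic functions `g : E → ℂ`, and
Fubini concludes; the set itself is σ-compact, being the projection of a relatively closed subset
of `ℂ^{r+1} × D`.

Sard's theorem is proved by induction on `dim E`. Near a critical point at which every derivative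
of `g` vanishes, `g` is locally constant. Near one at which `D^{k+1} g = 0` but
`D^{k+2} g (m) ≠ 0`, the points with `D^{k+1} g = 0` lie on the hypersurface
`{D^{k+1} g (·) (tail m) = 0}`, which the implicit function theorem parametrizes analytically by an
open subset of a hyperplane; critical points of `g` on it are critical points of the
parametrized function, whose critical values are null by induction.
-/

open MeasureTheory

/-- The Laurent-polynomial-type function
`f_a(z) = ∑ i, aᵢ · ∏_{j<s} z_j^{αᵢⱼ} · ∏_{j<t} z_{s+j}^{βᵢⱼ}`
on `ℂ^{s+t}`, with integer exponents on the first `s` coordinates. -/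
noncomputable def laurentFun (s t r : ℕ) (α : Fin (r + 1) → Fin s → ℤ)
    (β : Fin (r + 1) → Fin t → ℕ) (a : Fin (r + 1) → ℂ) (z : Fin (s + t) → ℂ) : ℂ :=
  ∑ i, a i * ((∏ j, z (Fin.castAdd t j) ^ α i j) * ∏ j, z (Fin.natAdd s j) ^ β i j)

open Module Topology Filter Set

section Analytic

variable {𝕜 : Type*} [NontriviallyNormedField 𝕜] {E F : Type*}
  [NormedAddCommGroup E] [NormedSpace 𝕜 E] [NormedAddCommGroup F] [NormedSpace 𝕜 F]

theorem AnalyticAt.eventually_eq_of_iteratedFDeriv_eq_zero [CharZero 𝕜] [CompleteSpace F]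
    {g : E → F} {p : E} (hg : AnalyticAt 𝕜 g p)
    (h : ∀ k, iteratedFDeriv 𝕜 (k + 1) g p = 0) : ∀ᶠ w in 𝓝 p, g w = g p := by
  obtain ⟨P, r, hP⟩ := hg
  filter_upwards [Metric.eball_mem_nhds p hP.r_pos] with w hw
  have hsum := hP.hasSum_iteratedFDeriv (y := w - p)
    (by simpa [Metric.mem_eball, edist_eq_enorm_sub] using hw)
  rw [add_sub_cancel] at hsum
  refine hsum.unique (hasSum_single 0 fun k hk => ?_) |>.trans ?_
  · obtain ⟨k, rfl⟩ := Nat.exists_eq_succ_of_ne_zero hk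
    simp [h k]
  · simp

theorem ImplicitFunctionData.analyticAt_implicitFunction [CompleteSpace E] [CompleteSpace F]
    {G : Type*} [NormedAddCommGroup G] [NormedSpace 𝕜 G] [CompleteSpace G]
    (φ : ImplicitFunctionData 𝕜 E F G)
    (hl : AnalyticAt 𝕜 φ.leftFun φ.pt) (hr : AnalyticAt 𝕜 φ.rightFun φ.pt) :
    AnalyticAt 𝕜 φ.implicitFunction.uncurry (φ.prodFun φ.pt) := by
  obtain ⟨i, hi⟩ := φ.isInvertible_fderiv_prodFun
  exact φ.toOpenPartialHomeomorph.analyticAt_symm' φ.pt_mem_toOpenPartialHomeomorph_source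
    (hl.prod hr) hi.symm

theorem AnalyticAt.analyticAt_implicitFunction [CompleteSpace 𝕜] [CompleteSpace E]
    [FiniteDimensional 𝕜 F] {f : E → F} {a : E} (hf : AnalyticAt 𝕜 f a)
    (hf' : (fderiv 𝕜 f a).range = ⊤) :
    AnalyticAt 𝕜 (hf.hasStrictFDerivAt.implicitFunction f _ hf' (f a)) 0 := by
  have := FiniteDimensional.complete 𝕜 F
  have hker := (fderiv 𝕜 f a).ker_closedComplemented_of_finiteDimensional_range
  have h := (hf.hasStrictFDerivAt.implicitFunctionDataOfComplemented f _ hf' hker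
    ).analyticAt_implicitFunction hf
    ((Classical.choose hker).analyticAt _ |>.comp (analyticAt_id.sub analyticAt_const))
  simp only [HasStrictFDerivAt.implicitFunctionDataOfComplemented,
    ImplicitFunctionData.prodFun_apply, sub_self, map_zero] at h
  exact h.comp (analyticAt_const.prod analyticAt_id)

end Analytic

theorem Nat.exists_and_not_succ {P : ℕ → Prop} (h0 : P 0) (h : ¬ ∀ n, P n) :
    ∃ k, P k ∧ ¬ P (k + 1) := by
  by_contra! hk
  exact h fun n => Nat.rec h0 hk n

theorem measure_image_eq_zero_of_forall_nhds {X Y : Type*} [TopologicalSpace X]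
    [SecondCountableTopology X] [MeasurableSpace Y] {μ : Measure Y} {f : X → Y} {s : Set X}
    (h : ∀ x ∈ s, ∃ V ∈ 𝓝 x, μ (f '' (s ∩ V)) = 0) : μ (f '' s) = 0 := by
  choose! V hV hnull using h
  obtain ⟨t, hts, htc, hcov⟩ := TopologicalSpace.countable_cover_nhdsWithin
    fun x hx => mem_nhdsWithin_of_mem_nhds (hV x hx)
  have hsub : f '' s ⊆ ⋃ x ∈ t, f '' (s ∩ V x) := by
    rintro _ ⟨z, hz, rfl⟩
    obtain ⟨x, hxt, hzx⟩ := mem_iUnion₂.mp (hcov hz)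
    exact mem_iUnion₂.mpr ⟨x, hxt, z, ⟨hz, hzx⟩, rfl⟩
  exact measure_mono_null hsub ((measure_biUnion_null_iff htc).2 fun x hx => hnull x (hts hx))

theorem volume_eq_zero_of_forall_volume_cons_preimage {α : Type*} [MeasureSpace α]
    [SigmaFinite (volume : Measure α)] {r : ℕ} {s : Set (Fin (r + 1) → α)} (hs : MeasurableSet s)
    (h : ∀ a : Fin r → α, volume {c | Fin.cons c a ∈ s} = 0) : volume s = 0 := by
  have he := (volume_preserving_piFinSuccAbove (fun _ : Fin (r + 1) => α) 0).symm
  rw [← he.measure_preimage hs.nullMeasurableSet, Measure.volume_eq_prod,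
    Measure.prod_apply_symm (hs.preimage he.measurable)]
  refine (lintegral_congr fun a => ?_).trans lintegral_zero
  convert h a using 2
  ext c
  simp [MeasurableEquiv.piFinSuccAbove, Fin.consEquiv]

theorem IsSigmaCompact.measurableSet {X : Type*} [TopologicalSpace X] [MeasurableSpace X]
    [T2Space X] [OpensMeasurableSpace X] {s : Set X} (hs : IsSigmaCompact s) : MeasurableSet s := by
  obtain ⟨K, hK, rfl⟩ := hs
  exact MeasurableSet.iUnion fun n => (hK n).measurableSet

theorem IsOpen.isSigmaCompact_inter_preimage {X Y : Type*} [TopologicalSpace X]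
    [LocallyCompactSpace X] [SecondCountableTopology X] [TopologicalSpace Y] {O : Set X}
    (hO : IsOpen O) {f : X → Y} (hf : ContinuousOn f O) {C : Set Y} (hC : IsClosed C) :
    IsSigmaCompact (O ∩ f ⁻¹' C) := by
  have := hO.locallyCompactSpace
  have hcl : IsClosed (O.domRestrict f ⁻¹' C) := hC.preimage hf.domRestrict
  convert (isSigmaCompact_univ.of_isClosed_subset hcl (subset_univ _)).image continuous_subtype_val
  ext x
  simp [Set.domRestrict, and_comm]

section Sard

def HasNullCriticalValues (E : Type*) [NormedAddCommGroup E] [NormedSpace ℂ E] : Prop :=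
  ∀ ⦃U : Set E⦄, IsOpen U → ∀ ⦃g : E → ℂ⦄, AnalyticOnNhd ℂ g U →
    volume (g '' {z ∈ U | fderiv ℂ g z = 0}) = 0

variable {E : Type*} [NormedAddCommGroup E] [NormedSpace ℂ E]

theorem AnalyticOnNhd.volume_image_setOf_iteratedFDeriv_eq_zero [SecondCountableTopology E]
    {U : Set E} {g : E → ℂ} (hg : AnalyticOnNhd ℂ g U) :
    volume (g '' {z ∈ U | ∀ k, iteratedFDeriv ℂ (k + 1) g z = 0}) = 0 := by
  refine measure_image_eq_zero_of_forall_nhds fun p hp => ?_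
  refine ⟨_, (hg p hp.1).eventually_eq_of_iteratedFDeriv_eq_zero hp.2, measure_mono_null ?_
    (measure_singleton (g p))⟩
  rintro _ ⟨z, ⟨-, hz⟩, rfl⟩
  exact hz

variable [FiniteDimensional ℂ E]

theorem exists_mem_nhds_volume_image_critical_levelSet_eq_zero
    (ih : ∀ K : Submodule ℂ E, finrank ℂ K < finrank ℂ E → HasNullCriticalValues K)
    {U : Set E} (hU : IsOpen U) {g : E → ℂ} (hg : AnalyticOnNhd ℂ g U)
    {φ : E → ℂ} {p : E} (hφ : AnalyticAt ℂ φ p) (hφ' : fderiv ℂ φ p ≠ 0) :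
    ∃ V ∈ 𝓝 p, volume (g '' {z ∈ U ∩ V | fderiv ℂ g z = 0 ∧ φ z = φ p}) = 0 := by
  set L := fderiv ℂ φ p
  have hL0 : (L : E →ₗ[ℂ] ℂ) ≠ 0 := by exact_mod_cast hφ'
  have hL : (L : E →ₗ[ℂ] ℂ).range = ⊤ := Module.Dual.range_eq_top_of_ne_zero hL0
  have hK : finrank ℂ (L : E →ₗ[ℂ] ℂ).ker < finrank ℂ E :=
    Submodule.finrank_lt (LinearMap.ker_eq_top.not.2 hL0)
  set ψ := hφ.hasStrictFDerivAt.implicitFunction φ L hL (φ p)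
  set e := hφ.hasStrictFDerivAt.implicitToOpenPartialHomeomorph φ L hL
  set W := {y | AnalyticAt ℂ ψ y}
  have hW : IsOpen (W ∩ ψ ⁻¹' U) :=
    ContinuousOn.isOpen_inter_preimage (fun y hy => hy.continuousAt.continuousWithinAt)
      (isOpen_analyticAt ℂ ψ) hU
  have hgψ : AnalyticOnNhd ℂ (g ∘ ψ) (W ∩ ψ ⁻¹' U) := fun y hy => (hg _ hy.2).comp hy.1
  have he : ∀ᶠ x in 𝓝 p, (e x).2 ∈ W := by
    refine ((e.continuousAt (hφ.hasStrictFDerivAt.mem_implicitToOpenPartialHomeomorph_source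
      hL)).snd).eventually_mem (isOpen_analyticAt ℂ ψ |>.mem_nhds ?_)
    simpa [e, hφ.hasStrictFDerivAt.implicitToOpenPartialHomeomorph_self hL] using
      hφ.analyticAt_implicitFunction hL
  refine ⟨_, (hφ.hasStrictFDerivAt.eq_implicitFunction hL).and he,
    measure_mono_null ?_ (ih _ hK hW hgψ)⟩
  rintro _ ⟨z, ⟨⟨hzU, hzψ, hzW⟩, hgz, hφz⟩, rfl⟩
  replace hzψ : ψ (e z).2 = z := by rwa [hφz] at hzψ
  refine ⟨(e z).2, ⟨⟨hzW, by rwa [mem_preimage, hzψ]⟩, ?_⟩, by simp [hzψ]⟩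
  rw [fderiv_comp _ (by rw [hzψ]; exact (hg z hzU).differentiableAt) hzW.differentiableAt, hzψ,
    hgz, ContinuousLinearMap.zero_comp]

theorem volume_image_critical_stratum_eq_zero
    (ih : ∀ K : Submodule ℂ E, finrank ℂ K < finrank ℂ E → HasNullCriticalValues K)
    {U : Set E} (hU : IsOpen U) {g : E → ℂ} (hg : AnalyticOnNhd ℂ g U) (k : ℕ) :
    volume (g '' {z ∈ U | fderiv ℂ g z = 0 ∧ iteratedFDeriv ℂ (k + 1) g z = 0 ∧
      iteratedFDeriv ℂ (k + 2) g z ≠ 0}) = 0 := by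
  refine measure_image_eq_zero_of_forall_nhds fun p ⟨hpU, _, hp, hp'⟩ => ?_
  obtain ⟨m, hm⟩ : ∃ m, iteratedFDeriv ℂ (k + 2) g p m ≠ 0 := by
    by_contra! h
    exact hp' (ContinuousMultilinearMap.ext h)
  set φ : E → ℂ := fun w => iteratedFDeriv ℂ (k + 1) g w (Fin.tail m)
  have hD : AnalyticAt ℂ (iteratedFDeriv ℂ (k + 1) g) p := hg.iteratedFDeriv (k + 1) p hpU
  have hφ : AnalyticAt ℂ φ p :=
    (ContinuousMultilinearMap.apply ℂ _ ℂ (Fin.tail m)).analyticAt _ |>.comp hD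
  have hφ' : fderiv ℂ φ p ≠ 0 := fun h => hm <| by
    have := congr($h (m 0))
    rwa [fderiv_continuousMultilinear_apply_const hD.differentiableAt,
      ContinuousLinearMap.flipMultilinear_apply_apply, ← iteratedFDeriv_succ_apply_left] at this
  obtain ⟨V, hV, hnull⟩ := exists_mem_nhds_volume_image_critical_levelSet_eq_zero ih hU hg hφ hφ'
  refine ⟨V, hV, measure_mono_null (image_mono ?_) hnull⟩
  rintro z ⟨⟨hzU, hgz, hz, -⟩, hzV⟩
  exact ⟨⟨hzU, hzV⟩, hgz, by simp [φ, hz, hp]⟩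

theorem hasNullCriticalValues : HasNullCriticalValues E := by
  induction hn : finrank ℂ E using Nat.strong_induction_on generalizing E with
  | _ n ih =>
  intro U hU g hg
  have ih' (K : Submodule ℂ E) (hK : finrank ℂ K < finrank ℂ E) : HasNullCriticalValues K :=
    ih _ (hn ▸ hK) rfl
  have hsub : {z ∈ U | fderiv ℂ g z = 0} ⊆ {z ∈ U | ∀ k, iteratedFDeriv ℂ (k + 1) g z = 0} ∪
      ⋃ k, {z ∈ U | fderiv ℂ g z = 0 ∧ iteratedFDeriv ℂ (k + 1) g z = 0 ∧
        iteratedFDeriv ℂ (k + 2) g z ≠ 0} := by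
    rintro z ⟨hzU, hz⟩
    by_cases hflat : ∀ k, iteratedFDeriv ℂ (k + 1) g z = 0
    · exact Or.inl ⟨hzU, hflat⟩
    · have h0 : iteratedFDeriv ℂ 1 g z = 0 := by
        ext v; simp [iteratedFDeriv_one_apply, hz]
      obtain ⟨k, hk, hk'⟩ :=
        Nat.exists_and_not_succ (P := fun k => iteratedFDeriv ℂ (k + 1) g z = 0) h0 hflat
      exact Or.inr (mem_iUnion.2 ⟨k, hzU, hz, hk, hk'⟩)
  refine measure_mono_null (image_mono hsub) ?_
  rw [image_union, image_iUnion]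
  exact measure_union_null hg.volume_image_setOf_iteratedFDeriv_eq_zero
    (measure_iUnion_null fun k => volume_image_critical_stratum_eq_zero ih' hU hg k)

end Sard

section LinearSystem

variable {E : Type*} [NormedAddCommGroup E] [NormedSpace ℂ E] {ι : Type*} [Fintype ι]

def singularCoeffs (D : Set E) (M : ι → E → ℂ) : Set (ι → ℂ) :=
  {a | ∃ z ∈ D, ∑ i, a i * M i z = 0 ∧ fderiv ℂ (fun w => ∑ i, a i * M i w) z = 0}

theorem fderiv_sum_mul {M : ι → E → ℂ} {z : E} (hM : ∀ i, DifferentiableAt ℂ (M i) z)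
    (a : ι → ℂ) : fderiv ℂ (fun w => ∑ i, a i * M i w) z = ∑ i, a i • fderiv ℂ (M i) z :=
  (HasFDerivAt.fun_sum fun i _ => (hM i).hasFDerivAt.const_mul (a i)).fderiv

theorem measurableSet_singularCoeffs [FiniteDimensional ℂ E] {D : Set E} (hD : IsOpen D)
    {M : ι → E → ℂ} (hM : ∀ i, AnalyticOnNhd ℂ (M i) D) : MeasurableSet (singularCoeffs D M) := by
  set Φ : (ι → ℂ) × E → ℂ × (E →L[ℂ] ℂ) :=
    fun p => (∑ i, p.1 i * M i p.2, ∑ i, p.1 i • fderiv ℂ (M i) p.2)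
  have hΦ : ContinuousOn Φ (univ ×ˢ D) := by
    refine .prodMk (continuousOn_finsetSum _ fun i _ => ?_) (continuousOn_finsetSum _ fun i _ => ?_)
    · exact (continuous_apply i).comp continuous_fst |>.continuousOn.mul
        ((hM i).continuousOn.comp continuous_snd.continuousOn fun p hp => hp.2)
    · exact (continuous_apply i).comp continuous_fst |>.continuousOn.smul
        ((hM i).fderiv.continuousOn.comp continuous_snd.continuousOn fun p hp => hp.2)
  have hS : singularCoeffs D M = Prod.fst '' ((univ ×ˢ D) ∩ Φ ⁻¹' {0}) := by
    ext a
    simp only [singularCoeffs, Φ, mem_ofPred_eq, mem_image, mem_inter_iff, mem_prod, mem_univ,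
      true_and, mem_preimage, mem_singleton_iff, Prod.mk_eq_zero, Prod.exists, exists_and_right,
      exists_eq_right]
    refine exists_congr fun z => and_congr_right fun hz => ?_
    rw [fderiv_sum_mul fun i => (hM i z hz).differentiableAt]
  rw [hS]
  exact ((isOpen_univ.prod hD).isSigmaCompact_inter_preimage hΦ isClosed_singleton).image
    continuous_fst |>.measurableSet

variable {r : ℕ}

/-- The value of `a 0` for which `∑ i, a i * M i w = 0`, where `a = Fin.cons (a 0) b`. -/
noncomputable def solveCoeffZero (M : Fin (r + 1) → E → ℂ) (b : Fin r → ℂ) (w : E) : ℂ :=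
  -(∑ i, b i * M i.succ w) / M 0 w

variable {D : Set E} {M : Fin (r + 1) → E → ℂ}

theorem analyticOnNhd_solveCoeffZero (hM : ∀ i, AnalyticOnNhd ℂ (M i) D)
    (hM0 : ∀ z ∈ D, M 0 z ≠ 0) (b : Fin r → ℂ) : AnalyticOnNhd ℂ (solveCoeffZero M b) D :=
  fun z hz => ((Finset.analyticAt_fun_sum _ fun i _ => analyticAt_const.mul
    (hM i.succ z hz)).neg).div (hM 0 z hz) (hM0 z hz)

theorem mem_image_critical_of_cons_mem_singularCoeffs (hD : IsOpen D)
    (hM : ∀ i, AnalyticOnNhd ℂ (M i) D) (hM0 : ∀ z ∈ D, M 0 z ≠ 0) {c : ℂ} {b : Fin r → ℂ}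
    (h : Fin.cons c b ∈ singularCoeffs D M) :
    c ∈ solveCoeffZero M b '' {z ∈ D | fderiv ℂ (solveCoeffZero M b) z = 0} := by
  obtain ⟨z, hz, hf, hdf⟩ := h
  set f := fun w => ∑ i, (Fin.cons c b : Fin (r + 1) → ℂ) i * M i w
  replace hf : f z = 0 := hf
  have hsolve : ∀ w ∈ D, solveCoeffZero M b w = c - f w * (M 0 w)⁻¹ := by
    intro w hw
    have hw0 := hM0 w hw
    simp only [solveCoeffZero, f, Fin.sum_univ_succ, Fin.cons_zero, Fin.cons_succ]
    field_simp
    ring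
  refine ⟨z, ⟨hz, ?_⟩, by rw [hsolve z hz, hf, zero_mul, sub_zero]⟩
  have hfd : DifferentiableAt ℂ f z :=
    DifferentiableAt.fun_sum fun i _ => (hM i z hz).differentiableAt.const_mul _
  have hinv : DifferentiableAt ℂ (fun w => (M 0 w)⁻¹) z :=
    ((hM 0 z hz).inv (hM0 z hz)).differentiableAt
  rw [(eventuallyEq_of_mem (hD.mem_nhds hz) hsolve).fderiv_eq, fderiv_const_sub,
    fderiv_fun_mul hfd hinv, hf, hdf]
  ext v
  simp

end LinearSystem

theorem volume_singularCoeffs_eq_zero {E : Type*} [NormedAddCommGroup E] [NormedSpace ℂ E]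
    [FiniteDimensional ℂ E] {r : ℕ} {D : Set E} (hD : IsOpen D) {M : Fin (r + 1) → E → ℂ}
    (hM : ∀ i, AnalyticOnNhd ℂ (M i) D) (hM0 : ∀ z ∈ D, M 0 z ≠ 0) :
    volume (singularCoeffs D M) = 0 :=
  volume_eq_zero_of_forall_volume_cons_preimage (measurableSet_singularCoeffs hD hM) fun b =>
    measure_mono_null (fun _ hc => mem_image_critical_of_cons_mem_singularCoeffs hD hM hM0 hc)
      (hasNullCriticalValues hD (analyticOnNhd_solveCoeffZero hM hM0 b))

section Laurent

variable (s t : ℕ)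

def laurentDomain : Set (Fin (s + t) → ℂ) := {z | ∀ j, z (Fin.castAdd t j) ≠ 0}

noncomputable def laurentMonomial (α : Fin s → ℤ) (β : Fin t → ℕ) (z : Fin (s + t) → ℂ) : ℂ :=
  (∏ j, z (Fin.castAdd t j) ^ α j) * ∏ j, z (Fin.natAdd s j) ^ β j

theorem isOpen_laurentDomain : IsOpen (laurentDomain s t) := by
  simp only [laurentDomain, ofPred_forall]
  exact isOpen_iInter_of_finite fun j => isOpen_ne_fun (continuous_apply _) continuous_const

theorem analyticOnNhd_laurentMonomial (α : Fin s → ℤ) (β : Fin t → ℕ) :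
    AnalyticOnNhd ℂ (laurentMonomial s t α β) (laurentDomain s t) := fun z hz => by
  have hcoord (k : Fin (s + t)) : AnalyticAt ℂ (fun w : Fin (s + t) → ℂ => w k) z :=
    (ContinuousLinearMap.proj (R := ℂ) (φ := fun _ => ℂ) k).analyticAt z
  exact (Finset.analyticAt_fun_prod _ fun j _ => (hcoord _).zpow (hz j)).mul
    (Finset.analyticAt_fun_prod _ fun _ _ => (hcoord _).pow _)

theorem laurentMonomial_zero_ne_zero (α : Fin s → ℤ) {z : Fin (s + t) → ℂ}
    (hz : z ∈ laurentDomain s t) : laurentMonomial s t α 0 z ≠ 0 := by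
  simpa [laurentMonomial, Finset.prod_ne_zero_iff] using fun j => zpow_ne_zero _ (hz j)

end Laurent

/-- Generic smoothness for Laurent hypersurfaces on `(ℂ*)^s × ℂ^t`:
assuming the `0`-th monomial is invertible on `D` (i.e. `β₀ = 0`), the set of
coefficient vectors `a` for which `f_a` has a singular zero in `D` is contained in a
Borel set of Lebesgue measure zero. -/
theorem generic_smoothness_of_laurent_hypersurfaces
    (s t r : ℕ) (α : Fin (r + 1) → Fin s → ℤ) (β : Fin (r + 1) → Fin t → ℕ)
    (hβ0 : β 0 = 0) :
    ∃ B : Set (Fin (r + 1) → ℂ), MeasurableSet B ∧ volume B = 0 ∧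
      {a : Fin (r + 1) → ℂ | ∃ z : Fin (s + t) → ℂ,
          (∀ j : Fin s, z (Fin.castAdd t j) ≠ 0) ∧
          laurentFun s t r α β a z = 0 ∧
          ∀ j : Fin (s + t), fderiv ℂ (laurentFun s t r α β a) z (Pi.single j 1) = 0}
        ⊆ B := by
  set D := laurentDomain s t
  set M := fun i => laurentMonomial s t (α i) (β i)
  have hD : IsOpen D := isOpen_laurentDomain s t
  have hM i : AnalyticOnNhd ℂ (M i) D := analyticOnNhd_laurentMonomial s t _ _
  have hM0 z (hz : z ∈ D) : M 0 z ≠ 0 := by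
    simpa [M, hβ0] using laurentMonomial_zero_ne_zero s t (α 0) hz
  refine ⟨singularCoeffs D M, measurableSet_singularCoeffs hD hM,
    volume_singularCoeffs_eq_zero hD hM hM0, fun a ⟨z, hz, hf, hdf⟩ => ⟨z, hz, hf, ?_⟩⟩
  -- `laurentFun s t r α β a` unfolds to `fun w => ∑ i, a i * M i w`.
  refine ContinuousLinearMap.coe_injective <| (Pi.basisFun ℂ _).ext fun j => ?_
  simp only [Pi.basisFun_apply, ContinuousLinearMap.coe_coe, ContinuousLinearMap.toLinearMap_zero,
    LinearMap.zero_apply]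
  exact hdf j
end

section
/- Let Δ ⊆ ℝ⁴ be a reflexive polytope, let w₁, …, w₅ ∈ Δ ∩ ℤ⁴, and let b₁, …, b₅ be positive integers with b₁w₁ + b₂w₂ + b₃w₃ = b₄w₄ + b₅w₅. If w₁, w₂, w₃ lie in a common proper face of Δ and w₄, w₅ lie in a common proper face of Δ, then b₁ + b₂ + b₃ = b₄ + b₅ and w₁, w₂, w₃, w₄, w₅ all lie in a common proper face of Δ. -/
open Pointwise

/-!
Pair the relation `b₁w₁ + b₂w₂ + b₃w₃ = b₄w₄ + b₅w₅` with a functional `u` supporting the face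
of `w₁, w₂, w₃`: the left side gives `b₁ + b₂ + b₃`, the right side at most `b₄ + b₅` because
`⟨u, ·⟩ ≤ 1` on `Δ`. The functional of the face of `w₄, w₅` gives the reverse inequality, so the
sums agree, and then equality with positive weights forces `⟨u, w₄⟩ = ⟨u, w₅⟩ = 1`.
-/

section SupportingFunctional

variable {d : ℕ} {ι : Type*} {Δ : Set (Fin d → ℝ)} {u : Fin d → ℝ} {s t : Finset ι}
  {b : ι → ℝ} {w : ι → Fin d → ℝ}

lemma pairing_sum_smul (u : Fin d → ℝ) (s : Finset ι) (b : ι → ℝ) (w : ι → Fin d → ℝ) :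
    pairing u (∑ i ∈ s, b i • w i) = ∑ i ∈ s, b i * pairing u (w i) := by
  change u ⬝ᵥ _ = ∑ i ∈ s, b i * (u ⬝ᵥ w i)
  simp only [dotProduct_sum, dotProduct_smul, smul_eq_mul]

lemma sum_eq_sum_mul_pairing (hs : ∀ i ∈ s, pairing u (w i) = 1)
    (hrel : ∑ i ∈ s, b i • w i = ∑ j ∈ t, b j • w j) :
    ∑ i ∈ s, b i = ∑ j ∈ t, b j * pairing u (w j) := by
  rw [← pairing_sum_smul, ← hrel, pairing_sum_smul]
  exact Finset.sum_congr rfl fun i hi => by rw [hs i hi, mul_one]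

lemma sum_le_sum_of_pairing_le_one (hu : ∀ x ∈ Δ, pairing u x ≤ 1)
    (hs : ∀ i ∈ s, pairing u (w i) = 1) (hwΔ : ∀ j ∈ t, w j ∈ Δ) (hb : ∀ j ∈ t, 0 ≤ b j)
    (hrel : ∑ i ∈ s, b i • w i = ∑ j ∈ t, b j • w j) :
    ∑ i ∈ s, b i ≤ ∑ j ∈ t, b j := by
  rw [sum_eq_sum_mul_pairing hs hrel]
  exact Finset.sum_le_sum fun j hj => mul_le_of_le_one_right (hb j hj) (hu _ (hwΔ j hj))

lemma pairing_eq_one_of_sum_eq (hu : ∀ x ∈ Δ, pairing u x ≤ 1)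
    (hs : ∀ i ∈ s, pairing u (w i) = 1) (hwΔ : ∀ j ∈ t, w j ∈ Δ) (hb : ∀ j ∈ t, 0 < b j)
    (hrel : ∑ i ∈ s, b i • w i = ∑ j ∈ t, b j • w j)
    (hsum : ∑ i ∈ s, b i = ∑ j ∈ t, b j) :
    ∀ j ∈ t, pairing u (w j) = 1 := by
  have hle : ∀ j ∈ t, b j * pairing u (w j) ≤ b j := fun j hj =>
    mul_le_of_le_one_right (hb j hj).le (hu _ (hwΔ j hj))
  have hterm := (Finset.sum_eq_sum_iff_of_le hle).1 <| by
    rw [← sum_eq_sum_mul_pairing hs hrel, hsum]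
  intro j hj
  exact (mul_eq_left₀ (hb j hj).ne').1 (hterm j hj)

end SupportingFunctional

theorem five_circuit_common_face_general
    (Δ : Set (Fin 4 → ℝ))
    (w : Fin 5 → (Fin 4 → ℝ))
    (hwΔ : ∀ i, w i ∈ Δ)
    (b : Fin 5 → ℤ) (hb : ∀ i, 0 < b i)
    (hrel : (b 0 : ℝ) • w 0 + (b 1 : ℝ) • w 1 + (b 2 : ℝ) • w 2
      = (b 3 : ℝ) • w 3 + (b 4 : ℝ) • w 4)
    (hface123 : InCommonFace Δ {w 0, w 1, w 2})
    (hface45 : InCommonFace Δ {w 3, w 4}) :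
    b 0 + b 1 + b 2 = b 3 + b 4 ∧ InCommonFace Δ (Set.range w) := by
  obtain ⟨u, hu, hu012⟩ := hface123
  obtain ⟨u', hu', hu'34⟩ := hface45
  set s : Finset (Fin 5) := {0, 1, 2}
  set t : Finset (Fin 5) := {3, 4}
  have hbpos : ∀ i, (0 : ℝ) < b i := fun i => by exact_mod_cast hb i
  have hrel' : ∑ i ∈ s, (b i : ℝ) • w i = ∑ j ∈ t, (b j : ℝ) • w j := by
    simpa [s, t, add_assoc] using hrel
  have hu_s : ∀ i ∈ s, pairing u (w i) = 1 := by simpa [s] using hu012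
  have hu'_t : ∀ j ∈ t, pairing u' (w j) = 1 := by simpa [t] using hu'34
  have hsum : ∑ i ∈ s, (b i : ℝ) = ∑ j ∈ t, (b j : ℝ) := le_antisymm
    (sum_le_sum_of_pairing_le_one hu hu_s (fun j _ => hwΔ j) (fun j _ => (hbpos j).le) hrel')
    (sum_le_sum_of_pairing_le_one hu' hu'_t (fun i _ => hwΔ i) (fun i _ => (hbpos i).le)
      hrel'.symm)
  have hu_t := pairing_eq_one_of_sum_eq hu hu_s (fun j _ => hwΔ j) (fun j _ => hbpos j) hrel' hsum
  have hsum' : (b 0 : ℝ) + b 1 + b 2 = b 3 + b 4 := by simpa [s, t, add_assoc] using hsum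
  refine ⟨by exact_mod_cast hsum', u, hu, ?_⟩
  rintro _ ⟨i, rfl⟩
  fin_cases i
  exacts [hu_s 0 (by simp [s]), hu_s 1 (by simp [s]), hu_s 2 (by simp [s]),
    hu_t 3 (by simp [t]), hu_t 4 (by simp [t])]

/-- If `w₁,…,w₅` are lattice points of a reflexive 4-polytope `Δ`
with `b₁w₁+b₂w₂+b₃w₃ = b₄w₄+b₅w₅` for positive integers `bᵢ`, and `w₁,w₂,w₃` lie in a
common proper face while `w₄,w₅` lie in a common proper face, then `b₁+b₂+b₃ = b₄+b₅`
and all five points lie in a common proper face of `Δ`. -/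
theorem five_circuit_common_face
    (Δ : Set (Fin 4 → ℝ)) (hΔ : IsReflexive Δ)
    (w : Fin 5 → (Fin 4 → ℝ))
    (hwΔ : ∀ i, w i ∈ Δ) (hwL : ∀ i, IsLatticePt (w i))
    (b : Fin 5 → ℤ) (hb : ∀ i, 0 < b i)
    (hrel : (b 0 : ℝ) • w 0 + (b 1 : ℝ) • w 1 + (b 2 : ℝ) • w 2
      = (b 3 : ℝ) • w 3 + (b 4 : ℝ) • w 4)
    (hface123 : InCommonFace Δ {w 0, w 1, w 2})
    (hface45 : InCommonFace Δ {w 3, w 4}) :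
    b 0 + b 1 + b 2 = b 3 + b 4 ∧ InCommonFace Δ (Set.range w) :=
  five_circuit_common_face_general Δ w hwΔ b hb hrel hface123 hface45
end
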